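/- arXiv:math/0403120 — 4 statements merged into one kernel-verified Lean document; each statement's English description precedes it below -/
import Mathlib

section
/- For every n > 4, the commutator subgroup B_n' = [B_n, B_n] of the Artin braid group B_n is a perfect group: [B_n', B_n'] = B_n'. -/
/-- The defining relations of the Artin braid group: commutation `σᵢσⱼ = σⱼσᵢ` for `|i−j| ≥ 2`
and the braid relations `σᵢσᵢ₊₁σᵢ = σᵢ₊₁σᵢσᵢ₊₁`, written as elements of the free group on
generators indexed by `Fin m`. -/
def braidRels (m : ℕ) : Set (FreeGroup (Fin m)) :=
  { r | (∃ i j : Fin m, i.val + 2 ≤ j.val ∧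
          r = FreeGroup.of i * FreeGroup.of j * (FreeGroup.of i)⁻¹ * (FreeGroup.of j)⁻¹) ∨
        (∃ i j : Fin m, i.val + 1 = j.val ∧
          r = FreeGroup.of i * FreeGroup.of j * FreeGroup.of i *
              (FreeGroup.of j * FreeGroup.of i * FreeGroup.of j)⁻¹) }

/-- The Artin braid group `B_n`, presented with generators `σ₁, …, σ_{n−1}`
(indexed by `Fin (n-1)`) and the braid relations. -/
abbrev BraidGroup (n : ℕ) := PresentedGroup (braidRels (n - 1))

/-- The generator `σ_{i+1}` of the braid group `B_n`, for `i : Fin (n-1)`. -/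
def braidσ {n : ℕ} (i : Fin (n - 1)) : BraidGroup n := PresentedGroup.of i

namespace BraidAux

open scoped commutatorElement

variable {m : ℕ}

abbrev G (m : ℕ) := PresentedGroup (braidRels m)

def σ (i : Fin m) : G m := PresentedGroup.of i

lemma rel_one {r : FreeGroup (Fin m)} (hr : r ∈ braidRels m) :
    PresentedGroup.mk (braidRels m) r = 1 :=
  (QuotientGroup.eq_one_iff _).mpr (Subgroup.subset_normalClosure hr)

lemma comm_rel {i j : Fin m} (h : i.val + 2 ≤ j.val) :
    Commute (σ i) (σ j) := by
  have hh : σ i * σ j * (σ i)⁻¹ * (σ j)⁻¹ = 1 := by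
    simpa [σ, PresentedGroup.of, map_mul, map_inv] using rel_one (m := m) (Or.inl ⟨i, j, h, rfl⟩)
  have h1 : σ i * σ j * (σ i)⁻¹ = σ j := mul_inv_eq_one.mp hh
  exact (mul_inv_eq_iff_eq_mul.mp h1)

lemma braid_rel {i j : Fin m} (h : i.val + 1 = j.val) :
    σ i * σ j * σ i = σ j * σ i * σ j := by
  have hh : σ i * σ j * σ i * (σ j * σ i * σ j)⁻¹ = 1 := by
    simpa [σ, PresentedGroup.of, map_mul, map_inv] using rel_one (m := m) (Or.inr ⟨i, j, h, rfl⟩)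
  exact mul_inv_eq_one.mp hh

lemma abstract_key {Γ : Type*} [Group Γ] (x y z : Γ)
    (h1 : Commute z x) (h2 : Commute z y) (hb : x * y * x = y * x * y) :
    ⁅x * y * z⁻¹ * z⁻¹, x * z⁻¹⁆ = y * x⁻¹ := by
  rw [commutatorElement_def]
  simp only [mul_inv_rev, inv_inv, mul_assoc]
  simp only [h1.left_comm, h2.left_comm, h1.inv_right.left_comm, h2.inv_right.left_comm,
    h1.inv_left.left_comm, h2.inv_left.left_comm, h1.inv_left.inv_right.left_comm,
    h2.inv_left.inv_right.left_comm,
    h1.eq, h2.eq, h1.inv_right.eq, h2.inv_right.eq,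
    h1.inv_left.eq, h2.inv_left.eq, h1.inv_left.inv_right.eq, h2.inv_left.inv_right.eq,
    inv_mul_cancel_left, mul_inv_cancel_left, inv_mul_cancel, mul_inv_cancel, mul_one]
  rw [show x * (y * (x * (y⁻¹ * (x⁻¹ * x⁻¹)))) = (x * y * x) * (y⁻¹ * x⁻¹ * x⁻¹) by group, hb]
  group

lemma abstract_prop {Γ : Type*} [Group Γ] (a b c : Γ)
    (hab : a = b) (hac : Commute a c) (hbr : b * c * b = c * b * c) : b = c := by
  have hbc : Commute b c := hab ▸ hac
  have h1 : b * c * b = b * (b * c) := by rw [mul_assoc, ← hbc.eq]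
  have h2 : c * b * c = b * (c * c) := by rw [← hbc.eq, mul_assoc]
  rw [h1, h2] at hbr
  exact mul_right_cancel (mul_left_cancel hbr)

/-- consecutive generator differences lie in the commutator subgroup. -/
lemma diff_mem {i j : Fin m} (h : i.val + 1 = j.val) :
    σ j * (σ i)⁻¹ ∈ commutator (G m) := by
  have hb := braid_rel h
  have key : σ j * (σ i)⁻¹ = ⁅σ i * σ j, σ i⁆ := by
    have e : ⁅σ i * σ j, σ i⁆ = (σ i * σ j * σ i) * ((σ j)⁻¹ * (σ i)⁻¹ * (σ i)⁻¹) := by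
      rw [commutatorElement_def]; group
    rw [e, hb]; group
  rw [key, commutator_def]
  exact Subgroup.commutator_mem_commutator (Subgroup.mem_top _) (Subgroup.mem_top _)

lemma key_le (hm : 4 ≤ m) :
    commutator (G m) ≤ ⁅commutator (G m), commutator (G m)⁆ := by
  set K : Subgroup (G m) := commutator (G m) with hK
  set N : Subgroup (G m) := ⁅K, K⁆ with hN
  haveI hKnorm : K.Normal := by rw [hK]; infer_instance
  haveI hNnorm : N.Normal := by rw [hN]; exact Subgroup.commutator_normal K K
  -- indices 0,1,2,3
  have h0 : (0 : ℕ) < m := by omega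
  have h1 : (1 : ℕ) < m := by omega
  have h2 : (2 : ℕ) < m := by omega
  have h3 : (3 : ℕ) < m := by omega
  set e0 : Fin m := ⟨0, h0⟩
  set e1 : Fin m := ⟨1, h1⟩
  set e2 : Fin m := ⟨2, h2⟩
  set e3 : Fin m := ⟨3, h3⟩
  have d10 : σ e1 * (σ e0)⁻¹ ∈ K := diff_mem rfl
  have d21 : σ e2 * (σ e1)⁻¹ ∈ K := diff_mem rfl
  have d32 : σ e3 * (σ e2)⁻¹ ∈ K := diff_mem rfl
  have b_mem : σ e0 * (σ e3)⁻¹ ∈ K := by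
    have e : σ e0 * (σ e3)⁻¹ =
        ((σ e3 * (σ e2)⁻¹) * (σ e2 * (σ e1)⁻¹) * (σ e1 * (σ e0)⁻¹))⁻¹ := by group
    rw [e]; exact inv_mem (mul_mem (mul_mem d32 d21) d10)
  have m13 : σ e1 * (σ e3)⁻¹ ∈ K := by
    have e : σ e1 * (σ e3)⁻¹ = (σ e2 * (σ e1)⁻¹)⁻¹ * (σ e3 * (σ e2)⁻¹)⁻¹ := by group
    rw [e]; exact mul_mem (inv_mem d21) (inv_mem d32)
  have a_mem : σ e0 * σ e1 * (σ e3)⁻¹ * (σ e3)⁻¹ ∈ K := by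
    have e : σ e0 * σ e1 * (σ e3)⁻¹ * (σ e3)⁻¹ =
        (σ e0 * (σ e3)⁻¹) * (σ e3 * (σ e1 * (σ e3)⁻¹) * (σ e3)⁻¹) := by group
    rw [e]; exact mul_mem b_mem (hKnorm.conj_mem _ m13 _)
  have key_id : σ e1 * (σ e0)⁻¹ =
      ⁅σ e0 * σ e1 * (σ e3)⁻¹ * (σ e3)⁻¹, σ e0 * (σ e3)⁻¹⁆ :=
    (abstract_key (σ e0) (σ e1) (σ e3)
      (comm_rel (show e0.val + 2 ≤ e3.val by simp [e0, e3])).symm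
      (comm_rel (show e1.val + 2 ≤ e3.val by simp [e1, e3])).symm
      (braid_rel rfl)).symm
  have mem_N : σ e1 * (σ e0)⁻¹ ∈ N := by
    rw [key_id, hN]
    exact Subgroup.commutator_mem_commutator a_mem b_mem
  -- pass to the quotient
  set π : G m →* G m ⧸ N := QuotientGroup.mk' N with hπ
  have base : π (σ e1) = π (σ e0) := by
    have : π (σ e1 * (σ e0)⁻¹) = 1 := (QuotientGroup.eq_one_iff _).mpr mem_N
    rw [map_mul, map_inv, mul_inv_eq_one] at this
    exact this
  have consec : ∀ k (hk : k + 1 < m),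
      π (σ ⟨k + 1, hk⟩) = π (σ ⟨k, by omega⟩) := by
    intro k
    induction k with
    | zero => intro hk; exact base
    | succ k ih =>
      intro hk
      have hk' : k + 1 < m := by omega
      have ihe : π (σ ⟨k + 1, hk'⟩) = π (σ ⟨k, by omega⟩) := ih hk'
      have hac : Commute (π (σ ⟨k, by omega⟩)) (π (σ ⟨k + 2, hk⟩)) :=
        (comm_rel (show (k : ℕ) + 2 ≤ k + 2 from le_refl _)).map π
      have hbr := congrArg π (braid_rel (i := ⟨k + 1, hk'⟩) (j := ⟨k + 2, hk⟩) rfl)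
      simp only [map_mul] at hbr
      exact (abstract_prop _ _ _ ihe.symm hac hbr).symm
  have all_eq : ∀ k (hk : k < m), π (σ ⟨k, hk⟩) = π (σ e0) := by
    intro k
    induction k with
    | zero => intro hk; rfl
    | succ k ih => intro hk; exact (consec k hk).trans (ih (by omega))
  have in_zpowers : ∀ g : G m, π g ∈ Subgroup.zpowers (π (σ e0)) := by
    intro g
    refine PresentedGroup.generated_by (braidRels m)
      ((Subgroup.zpowers (π (σ e0))).comap π) (fun j => ?_) g
    show π (σ j) ∈ Subgroup.zpowers (π (σ e0))
    rw [show σ j = σ ⟨j.val, j.isLt⟩ from rfl, all_eq j.val j.isLt]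
    exact Subgroup.mem_zpowers _
  have final : ∀ g h : G m, ⁅g, h⁆ ∈ N := by
    intro g h
    have hone : π ⁅g, h⁆ = 1 := by
      rw [map_commutatorElement, commutatorElement_eq_one_iff_commute]
      obtain ⟨a, ha⟩ := in_zpowers g
      obtain ⟨b, hb⟩ := in_zpowers h
      rw [← ha, ← hb]
      exact (Commute.refl _).zpow_zpow a b
    exact (QuotientGroup.eq_one_iff _).mp hone
  rw [hK, commutator_def]
  exact Subgroup.commutator_le.mpr fun g _ h _ => final g h

end BraidAux

/-- **Commutator Theorem.** For `n > 4` the commutator subgroup `B_n' = [B_n, B_n]` of the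
Artin braid group `B_n` is perfect: `[B_n', B_n'] = B_n'`. -/
theorem commutator_of_braid_group_is_perfect (n : ℕ) (hn : 4 < n) :
    commutator ↥(commutator (BraidGroup n)) = ⊤ := by
  have hm : 4 ≤ n - 1 := by omega
  set K : Subgroup (BraidGroup n) := commutator (BraidGroup n) with hK
  have hKN : K ≤ ⁅K, K⁆ := BraidAux.key_le hm
  haveI : K.Normal := by rw [hK]; infer_instance
  have h2 : ⁅K, K⁆ = K := le_antisymm (Subgroup.commutator_le_left K K) hKN
  apply Subgroup.map_injective K.subtype_injective
  rw [commutator_def, Subgroup.map_commutator]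
  rw [← MonoidHom.range_eq_map, Subgroup.range_subtype, h2]
end

section
/- For every n > 4, the commutator subgroup B_n(S²)' = [B_n(S²), B_n(S²)] of the sphere braid group B_n(S²) is a perfect group: [B_n(S²)', B_n(S²)'] = B_n(S²)'. -/
/-- The additional sphere relation `σ₁σ₂⋯σ_{n−1}·σ_{n−1}⋯σ₂σ₁ = 1`, as an element of the
free group on generators indexed by `Fin m` (here `m = n − 1`). -/
def sphereRel (m : ℕ) : FreeGroup (Fin m) :=
  (List.ofFn fun i : Fin m => FreeGroup.of i).prod *
    ((List.ofFn fun i : Fin m => FreeGroup.of i).reverse).prod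

/-- The defining relations of the sphere braid group `B_n(S²)`. -/
def sphereBraidRels (m : ℕ) : Set (FreeGroup (Fin m)) :=
  braidRels m ∪ {sphereRel m}

/-- The sphere braid group `B_n(S²)`, presented with generators `σ₁, …, σ_{n−1}`, the braid
relations and the relation `σ₁σ₂⋯σ_{n−1}·σ_{n−1}⋯σ₂σ₁ = 1`. -/
abbrev SphereBraidGroup (n : ℕ) := PresentedGroup (sphereBraidRels (n - 1))

namespace SBPerfect

variable {m : ℕ}

local notation "Gp" => PresentedGroup (sphereBraidRels m)

/-- generator -/
noncomputable def σ (i : Fin m) : Gp := PresentedGroup.of i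

lemma mk_rel {r : FreeGroup (Fin m)} (hr : r ∈ sphereBraidRels m) :
    PresentedGroup.mk (sphereBraidRels m) r = 1 :=
  (QuotientGroup.eq_one_iff r).2 (Subgroup.subset_normalClosure hr)

lemma comm_rel {i j : Fin m} (h : i.val + 2 ≤ j.val) : σ i * σ j = σ j * σ i := by
  have h1 : PresentedGroup.mk (sphereBraidRels m)
      (FreeGroup.of i * FreeGroup.of j * (FreeGroup.of i)⁻¹ * (FreeGroup.of j)⁻¹) = 1 :=
    mk_rel (Set.mem_union_left _ (Or.inl ⟨i, j, h, rfl⟩))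
  simp only [map_mul, map_inv] at h1
  have h2 : (σ i * σ j) * (σ j * σ i)⁻¹ = 1 := by
    rw [show (σ i * σ j) * (σ j * σ i)⁻¹ = σ i * σ j * (σ i)⁻¹ * (σ j)⁻¹ by group]
    exact h1
  exact mul_inv_eq_one.mp h2

lemma braid_rel {i j : Fin m} (h : i.val + 1 = j.val) : σ i * σ j * σ i = σ j * σ i * σ j := by
  have h1 : PresentedGroup.mk (sphereBraidRels m)
      (FreeGroup.of i * FreeGroup.of j * FreeGroup.of i *
        (FreeGroup.of j * FreeGroup.of i * FreeGroup.of j)⁻¹) = 1 :=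
    mk_rel (Set.mem_union_left _ (Or.inr ⟨i, j, h, rfl⟩))
  simp only [map_mul, map_inv] at h1
  exact mul_inv_eq_one.mp h1

lemma ab_adj {i j : Fin m} (h : i.val + 1 = j.val) :
    Abelianization.of (σ i) = Abelianization.of (σ j) := by
  have hb := congrArg (Abelianization.of (G := Gp)) (braid_rel h)
  set x := Abelianization.of (σ i) with hx
  set y := Abelianization.of (σ j) with hy
  simp only [map_mul] at hb
  -- hb : x * y * x = y * x * y
  have h2 : x * (x * y) = y * (x * y) := by
    calc x * (x * y) = x * y * x := by rw [mul_comm x (x * y)]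
    _ = y * x * y := hb
    _ = y * (x * y) := by rw [mul_assoc]
  exact mul_right_cancel h2

lemma ab_all (hm : 0 < m) (i : Fin m) :
    Abelianization.of (σ i) = Abelianization.of (σ (⟨0, hm⟩ : Fin m)) := by
  obtain ⟨k, hk⟩ := i
  induction k with
  | zero => rfl
  | succ k ih =>
      have h1 : k < m := by omega
      rw [← ab_adj (i := (⟨k, h1⟩ : Fin m)) (j := ⟨k + 1, hk⟩) rfl]
      exact ih h1

lemma memK (hm : 0 < m) (i j : Fin m) : σ i * (σ j)⁻¹ ∈ commutator Gp := by
  apply (QuotientGroup.eq_one_iff (σ i * (σ j)⁻¹)).1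
  show Abelianization.of (σ i * (σ j)⁻¹) = 1
  rw [map_mul, map_inv, ab_all hm i, ab_all hm j, mul_inv_cancel]

end SBPerfect

namespace SBPerfect2
open SBPerfect
open scoped commutatorElement

lemma main {m : ℕ} (hm : 4 ≤ m) :
    commutator (PresentedGroup (sphereBraidRels m))
      ≤ ⁅commutator (PresentedGroup (sphereBraidRels m)),
          commutator (PresentedGroup (sphereBraidRels m))⁆ := by
  have hm0 : 0 < m := by omega
  set Gp := PresentedGroup (sphereBraidRels m) with hGp
  set K : Subgroup Gp := commutator Gp with hK
  set D : Subgroup Gp := ⁅K, K⁆ with hDdef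
  haveI hDn : D.Normal := Subgroup.commutator_normal K K
  set π : Gp →* Gp ⧸ D := QuotientGroup.mk' D with hπ
  have commK : ∀ x y : Gp, x ∈ K → y ∈ K → π x * π y = π y * π x := by
    intro x y hx hy
    have h1 : π ⁅x, y⁆ = 1 :=
      (QuotientGroup.eq_one_iff _).2 (Subgroup.commutator_mem_commutator hx hy)
    rw [map_commutatorElement] at h1
    exact commutatorElement_eq_one_iff_mul_comm.mp h1
  set i0 : Fin m := ⟨0, hm0⟩ with hi0
  set t : Gp ⧸ D := π (σ i0) with ht
  set e1 : Fin m → Gp := fun i => σ i * (σ i0)⁻¹ with he1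
  set e2 : Fin m → Gp := fun i => σ i0 * e1 i * (σ i0)⁻¹ with he2
  set e3 : Fin m → Gp := fun i => σ i0 * e2 i * (σ i0)⁻¹ with he3
  have hKn : K.Normal := by rw [hK]; infer_instance
  have he1K : ∀ i, e1 i ∈ K := fun i => memK hm0 i i0
  have he2K : ∀ i, e2 i ∈ K := fun i => hKn.conj_mem _ (he1K i) _
  have he3K : ∀ i, e3 i ∈ K := fun i => hKn.conj_mem _ (he2K i) _
  set A : Fin m → Gp ⧸ D := fun i => π (e1 i) with hA
  set cA : Fin m → Gp ⧸ D := fun i => π (e2 i) with hcAd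
  set ccA : Fin m → Gp ⧸ D := fun i => π (e3 i) with hccAd
  have hcA : ∀ i, cA i = t * A i * t⁻¹ := by
    intro i; simp only [hcAd, he2, map_mul, map_inv, ht, hA]
  have hccA : ∀ i, ccA i = t * cA i * t⁻¹ := by
    intro i; simp only [hccAd, he3, map_mul, map_inv, ht, hcAd]
  have hu : ∀ i, π (σ i) = A i * t := by
    intro i
    rw [hA, ht, he1]
    rw [← map_mul]
    congr 1
    group
  have hA0 : A i0 = 1 := by
    rw [hA, he1]
    simp only [mul_inv_cancel, map_one]
  have hcA0 : cA i0 = 1 := by rw [hcA, hA0]; group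
  have key1 : ∀ i j : Fin m, i.val + 2 ≤ j.val → A i * cA j = A j * cA i := by
    intro i j h
    have hc := congrArg π (comm_rel h)
    simp only [map_mul, hu] at hc
    have h2 : A i * cA j * (t * t) = A j * cA i * (t * t) := by
      rw [hcA i, hcA j]
      rw [show A i * (t * A j * t⁻¹) * (t * t) = A i * t * (A j * t) by group,
          show A j * (t * A i * t⁻¹) * (t * t) = A j * t * (A i * t) by group]
      exact hc
    exact mul_right_cancel h2
  have key2 : ∀ i j : Fin m, i.val + 1 = j.val →
      A i * cA j * ccA i = A j * cA i * ccA j := by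
    intro i j h
    have hc := congrArg π (braid_rel h)
    simp only [map_mul, hu] at hc
    have h2 : A i * cA j * ccA i * (t * t * t) = A j * cA i * ccA j * (t * t * t) := by
      rw [hccA i, hccA j, hcA i, hcA j]
      rw [show A i * (t * A j * t⁻¹) * (t * (t * A i * t⁻¹) * t⁻¹) * (t * t * t)
            = A i * t * (A j * t) * (A i * t) by group,
          show A j * (t * A i * t⁻¹) * (t * (t * A j * t⁻¹) * t⁻¹) * (t * t * t)
            = A j * t * (A i * t) * (A j * t) by group]
      exact hc
    exact mul_right_cancel h2
  have hfix2 : ∀ j : Fin m, 2 ≤ j.val → cA j = A j := by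
    intro j hj
    have h := key1 i0 j (by simpa [hi0] using hj)
    rw [hA0, hcA0, one_mul, mul_one] at h
    exact h
  have hfix : ∀ i : Fin m, cA i = A i := by
    intro i
    by_cases h0 : i.val = 0
    · have : i = i0 := Fin.ext (by simpa [hi0] using h0)
      rw [this, hcA0, hA0]
    by_cases h2 : 2 ≤ i.val
    · exact hfix2 i h2
    · have hiv : i.val = 1 := by omega
      have i3 : Fin m := ⟨3, by omega⟩
      have h := key1 i ⟨3, by omega⟩ (by simp [hiv])
      rw [hfix2 ⟨3, by omega⟩ (by norm_num)] at h
      have hcm : A i * A ⟨3, by omega⟩ = A ⟨3, by omega⟩ * A i :=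
        commK _ _ (he1K i) (he1K ⟨3, by omega⟩)
      have h3 : A ⟨3, by omega⟩ * A i = A ⟨3, by omega⟩ * cA i := hcm.symm.trans h
      exact (mul_left_cancel h3).symm
  have hccfix : ∀ i : Fin m, ccA i = A i := by
    intro i
    rw [hccA i, hfix i, ← hcA i, hfix i]
  have hAone : ∀ i : Fin m, A i = 1 := by
    intro i
    obtain ⟨k, hk⟩ := i
    induction k with
    | zero => exact hA0
    | succ k ih =>
        have hkm : k < m := by omega
        have h := key2 ⟨k, hkm⟩ ⟨k + 1, hk⟩ rfl
        rw [hfix, hfix, hccfix, hccfix, ih hkm] at h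
        simp only [one_mul, mul_one] at h
        -- h : A ⟨k+1,hk⟩ = A ⟨k+1,hk⟩ * A ⟨k+1,hk⟩
        exact left_eq_mul.mp h
  have hut : ∀ i : Fin m, π (σ i) = t := by
    intro i; rw [hu i, hAone i, one_mul]
  have hcyc : ∀ x : Gp ⧸ D, x ∈ Subgroup.closure ({t} : Set (Gp ⧸ D)) := by
    intro x
    obtain ⟨g, rfl⟩ := QuotientGroup.mk'_surjective D x
    have hg : g ∈ Subgroup.closure (Set.range (PresentedGroup.of : Fin m → Gp)) := by
      rw [PresentedGroup.closure_range_of]; exact Subgroup.mem_top g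
    have hmem : π g ∈ Subgroup.closure (π '' Set.range (PresentedGroup.of : Fin m → Gp)) := by
      rw [← MonoidHom.map_closure]
      exact Subgroup.mem_map_of_mem π hg
    refine Subgroup.closure_mono ?_ hmem
    rintro y ⟨z, ⟨i, rfl⟩, rfl⟩
    simp only [Set.mem_singleton_iff]
    exact hut i
  have habel : ∀ x y : Gp ⧸ D, x * y = y * x := by
    intro x y
    obtain ⟨a, ha⟩ := Subgroup.mem_closure_singleton.mp (hcyc x)
    obtain ⟨b, hb⟩ := Subgroup.mem_closure_singleton.mp (hcyc y)
    rw [← ha, ← hb]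
    exact (Commute.zpow_zpow_self t a b).eq
  show commutator Gp ≤ D
  rw [commutator_def, Subgroup.commutator_le]
  intro g _ h _
  have h1 : π ⁅g, h⁆ = 1 := by
    rw [map_commutatorElement]
    exact commutatorElement_eq_one_iff_mul_comm.mpr (habel _ _)
  exact (QuotientGroup.eq_one_iff _).1 h1

end SBPerfect2

/-- **Commutator Theorem for the sphere.** For `n > 4` the commutator subgroup
`B_n(S²)' = [B_n(S²), B_n(S²)]` of the sphere braid group is perfect. -/
theorem commutator_of_sphere_braid_group_is_perfect (n : ℕ) (hn : 4 < n) :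
    commutator ↥(commutator (SphereBraidGroup n)) = ⊤ := by
  have hm : 4 ≤ n - 1 := by omega
  have hmain := SBPerfect2.main hm
  set K : Subgroup (SphereBraidGroup n) := commutator (SphereBraidGroup n) with hKdef
  apply Subgroup.map_injective K.subtype_injective
  rw [commutator_def, Subgroup.map_commutator, ← MonoidHom.range_eq_map,
    Subgroup.subtype_range]
  exact le_antisymm (Subgroup.commutator_le_left K K) hmain
end

section
/- (Gorin's relation) Let n ≥ 4. In the Artin braid group B_n one has the identity σ₃σ₁⁻¹ = (σ₁σ₂)⁻¹ · [σ₃σ₁⁻¹, σ₁σ₂⁻¹] · (σ₁σ₂), where [g, h] = g⁻¹h⁻¹gh denotes the commutator of g and h. -/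
/-- Gorin's relation holds in any group given the three braid-type relations. -/
lemma gorin_key {G : Type*} [Group G] (a b c : G) (h13 : a * c = c * a)
    (h12 : a * b * a = b * a * b) (h23 : b * c * b = c * b * c) :
    c * a⁻¹ = (a * b)⁻¹ * ((c * a⁻¹)⁻¹ * (a * b⁻¹)⁻¹ * (c * a⁻¹) * (a * b⁻¹)) * (a * b) := by
  have e1c : a⁻¹ * c = c * a⁻¹ := by
    have := congrArg (fun y => a⁻¹ * y * a⁻¹) h13
    simpa [mul_assoc] using this.symm
  have e2c : c⁻¹ * (b * c) = b * (c * b⁻¹) := by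
    have := congrArg (fun y => c⁻¹ * y * b⁻¹) h23
    simpa [mul_assoc] using this
  have e3c : b⁻¹ * (a⁻¹ * b⁻¹) = a⁻¹ * (b⁻¹ * a⁻¹) := by
    have := congrArg (fun y => y⁻¹) h12
    simpa [mul_assoc] using this.symm
  have e1 : ∀ x : G, a⁻¹ * (c * x) = c * (a⁻¹ * x) := fun x => by
    rw [← mul_assoc, e1c, mul_assoc]
  have e2 : ∀ x : G, c⁻¹ * (b * (c * x)) = b * (c * (b⁻¹ * x)) := fun x => by
    rw [show c⁻¹ * (b * (c * x)) = (c⁻¹ * (b * c)) * x by group, e2c]; group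
  have e3 : ∀ x : G, b⁻¹ * (a⁻¹ * (b⁻¹ * x)) = a⁻¹ * (b⁻¹ * (a⁻¹ * x)) := fun x => by
    rw [show b⁻¹ * (a⁻¹ * (b⁻¹ * x)) = (b⁻¹ * (a⁻¹ * b⁻¹)) * x by group, e3c]; group
  simp only [mul_inv_rev, inv_inv, mul_assoc, inv_mul_cancel_left, mul_inv_cancel_left]
  rw [e1, e2, e3]
  simp

lemma braid_rel_one {m : ℕ} {r : FreeGroup (Fin m)} (hr : r ∈ braidRels m) :
    (QuotientGroup.mk r : PresentedGroup (braidRels m)) = 1 :=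
  (QuotientGroup.eq_one_iff r).mpr (Subgroup.subset_normalClosure hr)

lemma braid_comm {m : ℕ} (i j : Fin m) (h : i.val + 2 ≤ j.val) :
    (PresentedGroup.of i : PresentedGroup (braidRels m)) * PresentedGroup.of j =
      PresentedGroup.of j * PresentedGroup.of i := by
  have h1 := braid_rel_one (Or.inl ⟨i, j, h, rfl⟩)
  rw [show (FreeGroup.of i * FreeGroup.of j * (FreeGroup.of i)⁻¹ * (FreeGroup.of j)⁻¹) =
      (FreeGroup.of i * FreeGroup.of j) * (FreeGroup.of j * FreeGroup.of i)⁻¹ by group,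
    QuotientGroup.mk_mul, QuotientGroup.mk_inv, mul_inv_eq_one] at h1
  exact h1

lemma braid_braid {m : ℕ} (i j : Fin m) (h : i.val + 1 = j.val) :
    (PresentedGroup.of i : PresentedGroup (braidRels m)) * PresentedGroup.of j *
        PresentedGroup.of i =
      PresentedGroup.of j * PresentedGroup.of i * PresentedGroup.of j := by
  have h1 := braid_rel_one (Or.inr ⟨i, j, h, rfl⟩)
  rw [QuotientGroup.mk_mul, QuotientGroup.mk_inv, mul_inv_eq_one] at h1
  exact h1

/-- **Gorin's relation.** For `n ≥ 4`, in the Artin braid group `B_n` one has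
`σ₃σ₁⁻¹ = (σ₁σ₂)⁻¹ · [σ₃σ₁⁻¹, σ₁σ₂⁻¹] · (σ₁σ₂)`, where `[g, h] = g⁻¹h⁻¹gh`. -/
theorem gorin_relation (n : ℕ) (hn : 4 ≤ n) :
    braidσ (n := n) ⟨2, by omega⟩ * (braidσ (n := n) ⟨0, by omega⟩)⁻¹ =
      (braidσ (n := n) ⟨0, by omega⟩ * braidσ (n := n) ⟨1, by omega⟩)⁻¹ *
        ((braidσ (n := n) ⟨2, by omega⟩ * (braidσ (n := n) ⟨0, by omega⟩)⁻¹)⁻¹ *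
            (braidσ (n := n) ⟨0, by omega⟩ * (braidσ (n := n) ⟨1, by omega⟩)⁻¹)⁻¹ *
            (braidσ (n := n) ⟨2, by omega⟩ * (braidσ (n := n) ⟨0, by omega⟩)⁻¹) *
            (braidσ (n := n) ⟨0, by omega⟩ * (braidσ (n := n) ⟨1, by omega⟩)⁻¹)) *
        (braidσ (n := n) ⟨0, by omega⟩ * braidσ (n := n) ⟨1, by omega⟩) := by
  exact gorin_key _ _ _
    (braid_comm ⟨0, by omega⟩ ⟨2, by omega⟩ (by simp))
    (braid_braid ⟨0, by omega⟩ ⟨1, by omega⟩ (by simp))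
    (braid_braid ⟨1, by omega⟩ ⟨2, by omega⟩ (by simp))
end

section
/- Let n ≠ 4 and k < n. Then every group homomorphism ψ : B_n → S(k) from the Artin braid group B_n to the symmetric group S(k) is cyclic, i.e. the image of ψ is a cyclic subgroup of S(k). -/
set_option linter.unusedSectionVars false

open Equiv Equiv.Perm

section GroupAux
variable {G : Type*} [Group G]

lemma braid_comm_eq {a b : G} (hb : a * b * a = b * a * b) (hc : a * b = b * a) : a = b := by
  rw [hc] at hb
  have : b * a * a = b * a * b := by rw [← hb]
  exact mul_left_cancel this

lemma chain_eq {X : Type*} {L : ℕ} {w : ℕ → X}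
    (hadj : ∀ i, i + 1 < L → w i = w (i + 1)) :
    ∀ i j, i < L → j < L → w i = w j := by
  have h0 : ∀ i, i < L → w i = w 0 := by
    intro i
    induction i with
    | zero => intro _; rfl
    | succ m ih =>
      intro h
      rw [← hadj m h]
      exact ih (Nat.lt_of_succ_lt h)
  intro i j hi hj; rw [h0 i hi, h0 j hj]

lemma braidSeq_all_eq_of_adj_eq {L : ℕ} {w : ℕ → G}
    (hbraid : ∀ i, i + 1 < L → w i * w (i+1) * w i = w (i+1) * w i * w (i+1))
    (hcomm : ∀ i j, j < L → i + 2 ≤ j → Commute (w i) (w j))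
    {i0 : ℕ} (h0 : i0 + 1 < L) (heq : w i0 = w (i0 + 1)) :
    ∀ i j, i < L → j < L → w i = w j := by
  have up : ∀ d, i0 + d + 1 < L → w (i0 + d) = w (i0 + d + 1) := by
    intro d
    induction d with
    | zero => exact fun _ => heq
    | succ m ih =>
      intro h
      have hm : i0 + m + 1 < L := by omega
      have ha := ih hm
      have hbr := hbraid (i0 + m + 1) (by omega)
      have hco : Commute (w (i0 + m)) (w (i0 + m + 2)) := hcomm _ _ (by omega) (by omega)
      rw [ha] at hco
      have key : w (i0 + m + 1) = w (i0 + m + 2) := by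
        apply braid_comm_eq
        · simpa using hbr
        · exact hco
      convert key using 2 <;> omega
  have down : ∀ d, d ≤ i0 → w (i0 - d) = w (i0 - d + 1) := by
    intro d
    induction d with
    | zero => intro _; simpa using heq
    | succ m ih =>
      intro h
      have ha := ih (by omega)
      set t := i0 - (m + 1) with ht
      have h1 : i0 - m = t + 1 := by omega
      rw [h1] at ha
      have hbr := hbraid t (by omega)
      have hco : Commute (w t) (w (t + 2)) := hcomm _ _ (by omega) (by omega)
      rw [← ha] at hco
      exact braid_comm_eq hbr hco
  have hadj : ∀ i, i + 1 < L → w i = w (i + 1) := by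
    intro i hi
    rcases le_or_gt i0 i with h | h
    · have := up (i - i0) (by omega)
      rwa [show i0 + (i - i0) = i from by omega] at this
    · have := down (i0 - i) (by omega)
      rwa [show i0 - (i0 - i) = i from by omega] at this
  exact chain_eq hadj

end GroupAux

section PermAux
variable {α : Type*} [Fintype α] [DecidableEq α]

lemma perm_sq_one_of_card_le_two (hα : Fintype.card α ≤ 2) (σ : Perm α) : σ * σ = 1 := by
  ext p
  simp only [Perm.mul_apply, Perm.one_apply]
  by_cases h : σ p = p
  · rw [h, h]
  · by_contra h2
    have h3 : σ (σ p) ≠ σ p := fun e => h (σ.injective e)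
    have hcard : ({p, σ p, σ (σ p)} : Finset α).card = 3 := by
      rw [Finset.card_insert_of_notMem, Finset.card_insert_of_notMem, Finset.card_singleton]
      · simp only [Finset.mem_singleton]
        exact fun e => h3 e.symm
      · simp only [Finset.mem_insert, Finset.mem_singleton]
        push_neg
        exact ⟨fun e => h e.symm, fun e => h2 e.symm⟩
    have := Finset.card_le_univ ({p, σ p, σ (σ p)} : Finset α)
    rw [hcard] at this
    omega

lemma perm_comm_of_card_le_two (hα : Fintype.card α ≤ 2) (σ τ : Perm α) : σ * τ = τ * σ := by
  have h1 := perm_sq_one_of_card_le_two hα σ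
  have h2 := perm_sq_one_of_card_le_two hα τ
  have h3 := perm_sq_one_of_card_le_two hα (σ * τ)
  have e1 : (σ * τ)⁻¹ = σ * τ := inv_eq_of_mul_eq_one_right h3
  have e2 : σ⁻¹ = σ := inv_eq_of_mul_eq_one_right h1
  have e3 : τ⁻¹ = τ := inv_eq_of_mul_eq_one_right h2
  calc σ * τ = (σ * τ)⁻¹ := e1.symm
    _ = τ⁻¹ * σ⁻¹ := mul_inv_rev σ τ
    _ = τ * σ := by rw [e2, e3]

lemma small_collapse (hα : Fintype.card α ≤ 2) {L : ℕ} {w : ℕ → Perm α}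
    (hbraid : ∀ i, i + 1 < L → w i * w (i+1) * w i = w (i+1) * w i * w (i+1)) :
    ∀ i j, i < L → j < L → w i = w j :=
  chain_eq fun i h => braid_comm_eq (hbraid i h) (perm_comm_of_card_le_two hα _ _)

lemma isSwap_sq {f : Perm α} (hf : f.IsSwap) : f * f = 1 := by
  obtain ⟨a, b, _, rfl⟩ := hf
  exact Equiv.swap_mul_self a b

lemma isSwap_support_eq {f : Perm α} (hf : f.IsSwap) {p : α} (hp : f p ≠ p) :
    f.support = {p, f p} := by
  obtain ⟨a, b, hab, rfl⟩ := hf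
  rw [Equiv.Perm.support_swap hab]
  rcases (Equiv.swap_apply_ne_self_iff.mp hp).2 with rfl | rfl
  · rw [Equiv.swap_apply_left]
  · rw [Equiv.swap_apply_right, Finset.pair_comm]

lemma commute_apply {x y : Perm α} (h : Commute x y) (p : α) : x (y p) = y (x p) := by
  have := DFunLike.congr_fun h p
  simpa [Perm.mul_apply] using this

lemma swap_comm_disjoint {f h : Perm α} (hf : f.IsSwap) (hh : h.IsSwap)
    (hc : Commute f h) (hne : f ≠ h) : Disjoint f.support h.support := by
  rw [Finset.disjoint_left]
  intro p hpf hph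
  rw [mem_support] at hpf hph
  apply hne
  have hcomm : ∀ q, f (h q) = h (f q) := fun q => commute_apply hc q
  have hhp : h p = f p := by
    have hmem : f (h p) ≠ h p := by
      intro e
      have h2 : h p = h (f p) := by rw [← hcomm p, e]
      exact hpf (h.injective h2).symm
    have hm : h p ∈ f.support := mem_support.mpr hmem
    rw [isSwap_support_eq hf hpf] at hm
    simp only [Finset.mem_insert, Finset.mem_singleton] at hm
    rcases hm with e | e
    · exact absurd e hph
    · exact e
  ext q
  by_cases hq : q ∈ f.support
  · rw [isSwap_support_eq hf hpf] at hq
    simp only [Finset.mem_insert, Finset.mem_singleton] at hq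
    rcases hq with e | e
    · rw [e, hhp]
    · have e1 : f (f p) = p := DFunLike.congr_fun (isSwap_sq hf) p
      have e2 : h (f p) = p := by
        rw [← hhp]
        exact DFunLike.congr_fun (isSwap_sq hh) p
      rw [e, e1, e2]
  · have hsupp : h.support = f.support := by
      rw [isSwap_support_eq hh hph, isSwap_support_eq hf hpf, hhp]
    have hq' : q ∉ h.support := by rw [hsupp]; exact hq
    rw [notMem_support] at hq hq'
    rw [hq, hq']

end PermAux

section KMach
variable {α : Type*} [Fintype α] [DecidableEq α]

/-- kernel elements: fix the fixed points of `g` and commute with all cycle factors. -/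
def IsK (g x : Perm α) : Prop :=
  (∀ p, g p = p → x p = p) ∧ ∀ c ∈ g.cycleFactorsFinset, Commute x c

lemma agree_pow {cyc x : Perm α} (hcyc : cyc.IsCycle) (hx : Commute x cyc)
    {p : α} (hp : cyc p ≠ p) :
    ∃ j : ℕ, ∀ q, cyc q ≠ q → x q = (cyc ^ j) q := by
  have hxp : cyc (x p) ≠ x p := by
    rw [← commute_apply hx p]
    exact fun e => hp (x.injective e)
  obtain ⟨j, hj⟩ := hcyc.exists_pow_eq hp hxp
  refine ⟨j, fun q hq => ?_⟩
  obtain ⟨i, hi⟩ := hcyc.exists_pow_eq hp hq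
  have hcp : Commute x (cyc ^ i) := hx.pow_right i
  calc x q = x ((cyc ^ i) p) := by rw [hi]
    _ = (cyc ^ i) (x p) := commute_apply hcp p
    _ = (cyc ^ i) ((cyc ^ j) p) := by rw [hj]
    _ = (cyc ^ j) ((cyc ^ i) p) := by
        rw [← Perm.mul_apply, ← Perm.mul_apply, ← pow_add, ← pow_add, Nat.add_comm]
    _ = (cyc ^ j) q := by rw [hi]

lemma sq_fix_of_commute_swapcycle {x c0 : Perm α} (hxc : Commute x c0) (hcyc : c0.IsCycle)
    (hsq : c0 * c0 = 1) {p : α} (hp : c0 p ≠ p) : x (x p) = p := by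
  obtain ⟨j, hj⟩ := agree_pow hcyc hxc hp
  have hxp : c0 ((c0 ^ j) p) ≠ (c0 ^ j) p := by
    have hcm : Commute (c0 ^ j) c0 := (Commute.refl c0).pow_left j
    rw [commute_apply hcm.symm p]
    exact fun e => hp ((c0 ^ j).injective e)
  rw [hj p hp, hj _ hxp, ← Perm.mul_apply, ← (Commute.refl c0).mul_pow, hsq, one_pow,
    Perm.one_apply]

lemma commute_of_isK {g w x : Perm α} (hwg : Commute w g)
    (hw : ∀ c ∈ g.cycleFactorsFinset, Commute w c) (hx : IsK g x) : Commute w x := by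
  ext p
  simp only [Perm.mul_apply]
  show w (x p) = x (w p)
  by_cases hp : g p = p
  · have h1 : x p = p := hx.1 p hp
    have h2 : g (w p) = w p := by rw [← commute_apply hwg p, hp]
    rw [h1, hx.1 _ h2]
  · set cyc := g.cycleOf p with hcycdef
    have hpmem : p ∈ g.support := mem_support.mpr hp
    have hmem : cyc ∈ g.cycleFactorsFinset := cycleOf_mem_cycleFactorsFinset_iff.mpr hpmem
    have hcyc : cyc.IsCycle := isCycle_cycleOf g hp
    have hp' : cyc p ≠ p := by rw [hcycdef, cycleOf_apply_self]; exact hp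
    have hxc : Commute x cyc := hx.2 _ hmem
    have hwc : Commute w cyc := hw _ hmem
    obtain ⟨j, hj⟩ := agree_pow hcyc hxc hp'
    have hwp : cyc (w p) ≠ w p := by
      rw [← commute_apply hwc p]
      exact fun e => hp' (w.injective e)
    calc w (x p) = w ((cyc ^ j) p) := by rw [hj p hp']
      _ = (cyc ^ j) (w p) := commute_apply (hwc.pow_right j) p
      _ = x (w p) := (hj (w p) hwp).symm

lemma isK_commute_g {g x : Perm α} (hx : IsK g x) : Commute x g := by
  ext p
  simp only [Perm.mul_apply]
  show x (g p) = g (x p)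
  by_cases hp : g p = p
  · rw [hp, hx.1 p hp, hp]
  · set cyc := g.cycleOf p with hcycdef
    have hpmem : p ∈ g.support := mem_support.mpr hp
    have hmem : cyc ∈ g.cycleFactorsFinset := cycleOf_mem_cycleFactorsFinset_iff.mpr hpmem
    have hcyc : cyc.IsCycle := isCycle_cycleOf g hp
    have hp' : cyc p ≠ p := by rw [hcycdef, cycleOf_apply_self]; exact hp
    have hxc : Commute x cyc := hx.2 _ hmem
    obtain ⟨j, hj⟩ := agree_pow hcyc hxc hp'
    have hgc : ∀ a, cyc a ≠ a → cyc a = g a := fun a ha =>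
      (mem_cycleFactorsFinset_iff.mp hmem).2 a (mem_support.mpr ha)
    have hcycp : cyc (cyc p) ≠ cyc p := fun e => hp' (cyc.injective e)
    have hxpmem : cyc (x p) ≠ x p := by
      rw [← commute_apply hxc p]
      exact fun e => hp' (x.injective e)
    calc x (g p) = x (cyc p) := by rw [hgc p hp']
      _ = (cyc ^ j) (cyc p) := hj _ hcycp
      _ = cyc ((cyc ^ j) p) := by
          rw [← Perm.mul_apply, ← Perm.mul_apply, ← pow_succ, ← pow_succ']
      _ = cyc (x p) := by rw [hj p hp']
      _ = g (x p) := hgc _ hxpmem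

lemma isK_comm {g x x' : Perm α} (hx : IsK g x) (hx' : IsK g x') : Commute x x' :=
  commute_of_isK (isK_commute_g hx) hx.2 hx'

lemma conj_mem_cycleFactors {g w c : Perm α} (hwg : Commute w g)
    (hc : c ∈ g.cycleFactorsFinset) : w * c * w⁻¹ ∈ g.cycleFactorsFinset := by
  rw [mem_cycleFactorsFinset_iff] at hc ⊢
  constructor
  · exact hc.1.conj
  · intro a ha
    rw [mem_support] at ha
    have ha' : c (w⁻¹ a) ≠ w⁻¹ a := by
      intro e
      apply ha
      simp only [Perm.mul_apply, e]
      exact Equiv.apply_symm_apply w a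
    have h1 : (w * c * w⁻¹) a = w (c (w⁻¹ a)) := by simp [Perm.mul_apply]
    rw [h1, hc.2 _ (mem_support.mpr ha'), commute_apply hwg, Equiv.Perm.coe_inv, Equiv.apply_symm_apply]

open scoped Classical in
/-- action on the fixed points of `g` -/
noncomputable def thetaFix (g w : Perm α) : Perm {p : α // g p = p} :=
  if hw : Commute w g then
    w.subtypePerm (fun p => by
      constructor
      · intro h
        have : w (g p) = w p := by rw [commute_apply hw p, h]
        exact w.injective this
      · intro h
        rw [← commute_apply hw p, h])
  else 1

open scoped Classical in
/-- action on the cycle factors of `g` -/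
noncomputable def thetaCyc (g w : Perm α) : Perm {c : Perm α // c ∈ g.cycleFactorsFinset} :=
  if hw : Commute w g then
    ((MulAut.conj w).toEquiv.subtypeEquiv (fun c => by
      simp only [MulEquiv.toEquiv_eq_coe, EquivLike.coe_coe, MulAut.conj_apply]
      constructor
      · exact fun hc => conj_mem_cycleFactors hw hc
      · intro hc
        have := conj_mem_cycleFactors hw.inv_left hc
        simpa [mul_assoc] using this))
  else 1

open scoped Classical in
lemma thetaFix_mul {g u v : Perm α} (hu : Commute u g) (hv : Commute v g) :
    thetaFix g (u * v) = thetaFix g u * thetaFix g v := by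
  rw [thetaFix, thetaFix, thetaFix, dif_pos hu, dif_pos hv, dif_pos (hu.mul_left hv)]
  ext p
  simp [subtypePerm_apply]
  rfl

open scoped Classical in
lemma thetaFix_apply {g w : Perm α} (hw : Commute w g) (p : {p : α // g p = p}) :
    ((thetaFix g w) p : α) = w p := by
  rw [thetaFix, dif_pos hw]
  simp [subtypePerm_apply]

open scoped Classical in
lemma thetaCyc_mul {g u v : Perm α} (hu : Commute u g) (hv : Commute v g) :
    thetaCyc g (u * v) = thetaCyc g u * thetaCyc g v := by
  rw [thetaCyc, thetaCyc, thetaCyc, dif_pos hu, dif_pos hv, dif_pos (hu.mul_left hv)]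
  ext c
  simp only [Perm.mul_apply, subtypeEquiv_apply, MulEquiv.toEquiv_eq_coe, EquivLike.coe_coe,
    MulAut.conj_apply]
  simp [mul_assoc]

open scoped Classical in
lemma thetaCyc_apply {g w : Perm α} (hw : Commute w g)
    (c : {c : Perm α // c ∈ g.cycleFactorsFinset}) :
    ((thetaCyc g w) c : Perm α) = w * c * w⁻¹ := by
  rw [thetaCyc, dif_pos hw]
  simp [subtypeEquiv_apply]

lemma card_fixedSubtype (g : Perm α) :
    Fintype.card {p : α // g p = p} = Fintype.card α - g.support.card := by
  have h1 : Fintype.card {p : α // g p = p} = (Finset.univ.filter fun p => g p = p).card :=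
    Fintype.card_subtype _
  have h2 : (Finset.univ.filter fun p => g p = p) = g.supportᶜ := by
    ext p
    simp [Finset.mem_filter, Finset.mem_compl, mem_support, not_not]
  rw [h1, h2, Finset.card_compl]

lemma two_mul_card_cycleFactors_le (g : Perm α) :
    2 * g.cycleFactorsFinset.card ≤ g.support.card := by
  have h1 : g.cycleType.sum = g.support.card := sum_cycleType g
  have h2 : Multiset.card g.cycleType = g.cycleFactorsFinset.card := by
    rw [cycleType]
    simp
  have h3 : Multiset.card g.cycleType • 2 ≤ g.cycleType.sum :=
    Multiset.card_nsmul_le_sum fun x hx => two_le_of_mem_cycleType hx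
  rw [h2, smul_eq_mul, mul_comm] at h3
  rw [← h1]
  exact h3

lemma two_le_support_card_of_ne_one {g : Perm α} (hg : g ≠ 1) : 2 ≤ g.support.card := by
  have := one_lt_card_support_of_ne_one hg
  omega

lemma card_cycleSubtype (g : Perm α) :
    Fintype.card {c : Perm α // c ∈ g.cycleFactorsFinset} = g.cycleFactorsFinset.card :=
  Fintype.card_coe _

end KMach

/-- Main collapse theorem: a braid sequence of length `M ≠ 3` acting on at most `M` points
is constant. -/
theorem braid_seq_collapse :
    ∀ M : ℕ, (M = 2 ∨ 4 ≤ M) → ∀ (α : Type) [Fintype α] [DecidableEq α],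
      Fintype.card α ≤ M → ∀ y : ℕ → Perm α,
      (∀ i, i + 1 < M → y i * y (i+1) * y i = y (i+1) * y i * y (i+1)) →
      (∀ i j, j < M → i + 2 ≤ j → Commute (y i) (y j)) →
      ∀ i j, i < M → j < M → y i = y j := by
  intro M
  induction M using Nat.strong_induction_on with
  | _ M IH =>
  intro hM α _ _ hcard y hbraid hcomm
  by_contra hne
  push_neg at hne
  obtain ⟨i1, j1, hi1, hj1, hne1⟩ := hne
  have hall : (∀ i j, i < M → j < M → y i = y j) → False := fun h => hne1 (h i1 j1 hi1 hj1)
  have hadj : ∀ i, i + 1 < M → y i ≠ y (i + 1) := fun i hi heq =>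
    hall (braidSeq_all_eq_of_adj_eq hbraid hcomm hi heq)
  rcases hM with hM2 | hM4
  · subst hM2
    exact hall (small_collapse hcard hbraid)
  -- now 4 ≤ M
  have hnt0 : y 0 ≠ 1 := by
    intro h1
    have hb := hbraid 0 (by omega)
    rw [h1] at hb
    simp only [one_mul, mul_one] at hb
    have h2 : y (0+1) = 1 := left_eq_mul.mp hb
    exact hadj 0 (by omega) (by rw [h1]; exact h2.symm)
  have hdist : ∀ i j, i < j → j < M → y i ≠ y j := by
    intro i j hij hj heq
    rcases Nat.lt_or_ge (i+1) j with hlt | hge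
    · rcases Nat.lt_or_ge (i+2) j with hlt2 | hge2
      · -- j ≥ i+3
        have hc : Commute (y (i+1)) (y j) := hcomm _ _ hj (by omega)
        rw [← heq] at hc
        exact hadj i (by omega) (braid_comm_eq (hbraid i (by omega)) hc.symm.eq)
      · -- j = i+2
        have hj2 : j = i + 2 := by omega
        subst hj2
        rcases Nat.eq_zero_or_pos i with rfl | hpos
        · have hc : Commute (y 0) (y 3) := hcomm 0 3 (by omega) (by omega)
          rw [heq] at hc
          exact hadj 2 (by omega) (braid_comm_eq (hbraid 2 (by omega)) hc.eq)
        · have hc : Commute (y (i-1)) (y (i+2)) := hcomm _ _ (by omega) (by omega)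
          rw [← heq] at hc
          have hb := hbraid (i-1) (by omega)
          rw [show i - 1 + 1 = i from by omega] at hb
          exact hadj (i-1) (by omega)
            (by rw [show i-1+1 = i from by omega]; exact braid_comm_eq hb hc.eq)
    · have hj1 : j = i + 1 := by omega
      subst hj1
      exact hadj i hj heq
  -- support cards all equal
  have hconj : ∀ i, i + 1 < M → y (i+1) = (y i * y (i+1)) * y i * (y i * y (i+1))⁻¹ := by
    intro i hi
    have hb := hbraid i hi
    calc y (i+1) = (y (i+1) * y i * y (i+1)) * (y (i+1))⁻¹ * (y i)⁻¹ := by group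
      _ = (y i * y (i+1) * y i) * (y (i+1))⁻¹ * (y i)⁻¹ := by rw [hb]
      _ = (y i * y (i+1)) * y i * (y i * y (i+1))⁻¹ := by group
  have hsupcard : ∀ i j, i < M → j < M → (y i).support.card = (y j).support.card := by
    apply chain_eq
    intro i hi
    conv_rhs => rw [hconj i hi]
    exact card_support_conj.symm
  -- dispose of the M = 5 transposition case
  by_cases hsw5 : M = 5 ∧ (y 0).support.card = 2
  · obtain ⟨hM5, hcard2⟩ := hsw5
    have hsw : ∀ i, i < M → (y i).IsSwap := fun i hi =>
      card_support_eq_two.mp (by rw [hsupcard i 0 hi (by omega), hcard2])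
    have h02 : Disjoint (y 0).support (y 2).support :=
      swap_comm_disjoint (hsw 0 (by omega)) (hsw 2 (by omega))
        (hcomm 0 2 (by omega) (by omega)) (hdist 0 2 (by omega) (by omega))
    have h04 : Disjoint (y 0).support (y 4).support :=
      swap_comm_disjoint (hsw 0 (by omega)) (hsw 4 (by omega))
        (hcomm 0 4 (by omega) (by omega)) (hdist 0 4 (by omega) (by omega))
    have h24 : Disjoint (y 2).support (y 4).support :=
      swap_comm_disjoint (hsw 2 (by omega)) (hsw 4 (by omega))
        (hcomm 2 4 (by omega) (by omega)) (hdist 2 4 (by omega) (by omega))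
    have hc0 : (y 0).support.card = 2 := hcard2
    have hc2 : (y 2).support.card = 2 := by rw [hsupcard 2 0 (by omega) (by omega), hcard2]
    have hc4 : (y 4).support.card = 2 := by rw [hsupcard 4 0 (by omega) (by omega), hcard2]
    have hu : ((y 0).support ∪ (y 2).support ∪ (y 4).support).card = 6 := by
      rw [Finset.card_union_of_disjoint (by rw [Finset.disjoint_union_left]; exact ⟨h04, h24⟩),
        Finset.card_union_of_disjoint h02, hc0, hc2, hc4]
    have hle := Finset.card_le_univ ((y 0).support ∪ (y 2).support ∪ (y 4).support)
    rw [hu] at hle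
    omega
  -- main case
  have hzg : ∀ i, i < M - 2 → Commute (y (i+2)) (y 0) :=
    fun i hi => (hcomm 0 (i+2) (by omega) (by omega)).symm
  have hbraid' : ∀ i, i + 1 < M - 2 →
      y (i+2) * y (i+1+2) * y (i+2) = y (i+1+2) * y (i+2) * y (i+1+2) := by
    intro i hi
    have hb := hbraid (i+2) (by omega)
    rwa [show i + 2 + 1 = i + 1 + 2 from by omega] at hb
  have hcomm' : ∀ i j, j < M - 2 → i + 2 ≤ j → Commute (y (i+2)) (y (j+2)) :=
    fun i j hj hij => hcomm (i+2) (j+2) (by omega) (by omega)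
  -- cardinality bounds for the two factor actions
  have hfix1 : Fintype.card {p : α // y 0 p = p} ≤ M - 2 := by
    rw [card_fixedSubtype]
    have h2 := two_le_support_card_of_ne_one hnt0
    omega
  have hfix2 : M ≤ 5 → Fintype.card {p : α // y 0 p = p} ≤ 2 := by
    intro h5
    rw [card_fixedSubtype]
    have h2 := two_le_support_card_of_ne_one hnt0
    rcases (by omega : M = 4 ∨ M = 5) with h | h
    · omega
    · have hne2 : (y 0).support.card ≠ 2 := fun e => hsw5 ⟨h, e⟩
      omega
  have hcyc1 : Fintype.card {c : Perm α // c ∈ (y 0).cycleFactorsFinset} ≤ M - 2 := by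
    rw [card_cycleSubtype]
    have := two_mul_card_cycleFactors_le (y 0)
    have hsc := Finset.card_le_univ (y 0).support
    omega
  have hcyc2 : M ≤ 5 → Fintype.card {c : Perm α // c ∈ (y 0).cycleFactorsFinset} ≤ 2 := by
    intro h5
    rw [card_cycleSubtype]
    have := two_mul_card_cycleFactors_le (y 0)
    have hsc := Finset.card_le_univ (y 0).support
    omega
  -- generic collapse for the factor actions
  have collapse : ∀ (β : Type) [Fintype β] [DecidableEq β], Fintype.card β ≤ M - 2 →
      (M ≤ 5 → Fintype.card β ≤ 2) → ∀ w : ℕ → Perm β,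
      (∀ i, i + 1 < M - 2 → w i * w (i+1) * w i = w (i+1) * w i * w (i+1)) →
      (∀ i j, j < M - 2 → i + 2 ≤ j → Commute (w i) (w j)) →
      ∀ i j, i < M - 2 → j < M - 2 → w i = w j := by
    intro β _ _ hb1 hb2 w hbw hcw
    rcases (by omega : 6 ≤ M ∨ M ≤ 5) with h6 | h5
    · exact IH (M-2) (by omega) (Or.inr (by omega)) β hb1 w hbw hcw
    · exact small_collapse (hb2 h5) hbw
  -- the collapse of the two theta sequences
  have hbraid0 : ∀ i, i + 1 < M - 2 →
      (fun i => thetaFix (y 0) (y (i+2))) i * (fun i => thetaFix (y 0) (y (i+2))) (i+1) *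
        (fun i => thetaFix (y 0) (y (i+2))) i =
      (fun i => thetaFix (y 0) (y (i+2))) (i+1) * (fun i => thetaFix (y 0) (y (i+2))) i *
        (fun i => thetaFix (y 0) (y (i+2))) (i+1) := by
    intro i hi
    have hu := hzg i (by omega)
    have hv := hzg (i+1) hi
    have h := congrArg (thetaFix (y 0)) (hbraid' i hi)
    simp only []
    rwa [thetaFix_mul (hu.mul_left hv) hu, thetaFix_mul hu hv,
      thetaFix_mul (hv.mul_left hu) hv, thetaFix_mul hv hu] at h
  have hcomm0 : ∀ i j, j < M - 2 → i + 2 ≤ j →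
      Commute ((fun i => thetaFix (y 0) (y (i+2))) i) ((fun i => thetaFix (y 0) (y (i+2))) j) := by
    intro i j hj hij
    have hu := hzg i (by omega)
    have hv := hzg j hj
    have h := congrArg (thetaFix (y 0)) (hcomm' i j hj hij).eq
    simp only []
    show thetaFix (y 0) (y (i+2)) * thetaFix (y 0) (y (j+2)) =
      thetaFix (y 0) (y (j+2)) * thetaFix (y 0) (y (i+2))
    rwa [thetaFix_mul hu hv, thetaFix_mul hv hu] at h
  have hbraidc : ∀ i, i + 1 < M - 2 →
      (fun i => thetaCyc (y 0) (y (i+2))) i * (fun i => thetaCyc (y 0) (y (i+2))) (i+1) *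
        (fun i => thetaCyc (y 0) (y (i+2))) i =
      (fun i => thetaCyc (y 0) (y (i+2))) (i+1) * (fun i => thetaCyc (y 0) (y (i+2))) i *
        (fun i => thetaCyc (y 0) (y (i+2))) (i+1) := by
    intro i hi
    have hu := hzg i (by omega)
    have hv := hzg (i+1) hi
    have h := congrArg (thetaCyc (y 0)) (hbraid' i hi)
    simp only []
    rwa [thetaCyc_mul (hu.mul_left hv) hu, thetaCyc_mul hu hv,
      thetaCyc_mul (hv.mul_left hu) hv, thetaCyc_mul hv hu] at h
  have hcommc : ∀ i j, j < M - 2 → i + 2 ≤ j →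
      Commute ((fun i => thetaCyc (y 0) (y (i+2))) i) ((fun i => thetaCyc (y 0) (y (i+2))) j) := by
    intro i j hj hij
    have hu := hzg i (by omega)
    have hv := hzg j hj
    have h := congrArg (thetaCyc (y 0)) (hcomm' i j hj hij).eq
    simp only []
    show thetaCyc (y 0) (y (i+2)) * thetaCyc (y 0) (y (j+2)) =
      thetaCyc (y 0) (y (j+2)) * thetaCyc (y 0) (y (i+2))
    rwa [thetaCyc_mul hu hv, thetaCyc_mul hv hu] at h
  have hcol0 := collapse _ hfix1 hfix2 _ hbraid0 hcomm0
  have hcolc := collapse _ hcyc1 hcyc2 _ hbraidc hcommc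
  -- kernel membership of the difference elements
  have hK : ∀ i, i < M - 2 → IsK (y 0) ((y 2)⁻¹ * y (i+2)) := by
    intro i hi
    constructor
    · intro p hp
      have h0 := hcol0 i 0 hi (by omega)
      have := congrArg (fun (e : Perm {p : α // y 0 p = p}) => (e ⟨p, hp⟩ : α)) h0
      rw [thetaFix_apply (hzg i hi), thetaFix_apply (hzg 0 (by omega))] at this
      -- this : y (i+2) p = y (0+2) p
      simp only [Perm.mul_apply]
      rw [this]
      simp [show (0:ℕ)+2 = 2 from rfl]
    · intro cc hcc
      have h0 := hcolc i 0 hi (by omega)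
      have := congrArg (fun (e : Perm {c : Perm α // c ∈ (y 0).cycleFactorsFinset}) =>
        (e ⟨cc, hcc⟩ : Perm α)) h0
      rw [thetaCyc_apply (hzg i hi), thetaCyc_apply (hzg 0 (by omega))] at this
      -- this : y (i+2) * cc * (y (i+2))⁻¹ = y (0+2) * cc * (y (0+2))⁻¹
      rw [show (0:ℕ)+2 = 2 from rfl] at this
      show (y 2)⁻¹ * y (i+2) * cc = cc * ((y 2)⁻¹ * y (i+2))
      have h2 : (y 2)⁻¹ * (y (i+2) * cc * (y (i+2))⁻¹) * y (i+2) =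
          (y 2)⁻¹ * (y 2 * cc * (y 2)⁻¹) * y (i+2) := by rw [this]
      calc (y 2)⁻¹ * y (i+2) * cc
          = (y 2)⁻¹ * (y (i+2) * cc * (y (i+2))⁻¹) * y (i+2) := by group
        _ = (y 2)⁻¹ * (y 2 * cc * (y 2)⁻¹) * y (i+2) := h2
        _ = cc * ((y 2)⁻¹ * y (i+2)) := by group
  -- shared endgame: if y 2 commutes with the kernel difference (y 2)⁻¹ * y 3 we are done
  have endgame : Commute (y 2) ((y 2)⁻¹ * y 3) → False := by
    intro ha
    have hy3 : y 3 = y 2 * ((y 2)⁻¹ * y 3) := by group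
    have hb2 := hbraid 2 (by omega)
    rw [show (2:ℕ)+1 = 3 from by norm_num, hy3] at hb2
    have l1 : y 2 * (y 2 * ((y 2)⁻¹ * y 3)) * y 2 = y 2 * y 2 * y 2 * ((y 2)⁻¹ * y 3) := by
      calc y 2 * (y 2 * ((y 2)⁻¹ * y 3)) * y 2
          = y 2 * y 2 * (((y 2)⁻¹ * y 3) * y 2) := by group
        _ = y 2 * y 2 * (y 2 * ((y 2)⁻¹ * y 3)) := by rw [ha.symm.eq]
        _ = y 2 * y 2 * y 2 * ((y 2)⁻¹ * y 3) := by group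
    have l2 : (y 2 * ((y 2)⁻¹ * y 3)) * y 2 * (y 2 * ((y 2)⁻¹ * y 3)) =
        y 2 * y 2 * y 2 * ((y 2)⁻¹ * y 3) * ((y 2)⁻¹ * y 3) := by
      calc (y 2 * ((y 2)⁻¹ * y 3)) * y 2 * (y 2 * ((y 2)⁻¹ * y 3))
          = y 2 * (((y 2)⁻¹ * y 3) * y 2) * (y 2 * ((y 2)⁻¹ * y 3)) := by group
        _ = y 2 * (y 2 * ((y 2)⁻¹ * y 3)) * (y 2 * ((y 2)⁻¹ * y 3)) := by rw [ha.symm.eq]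
        _ = y 2 * y 2 * (((y 2)⁻¹ * y 3) * y 2) * ((y 2)⁻¹ * y 3) := by group
        _ = y 2 * y 2 * (y 2 * ((y 2)⁻¹ * y 3)) * ((y 2)⁻¹ * y 3) := by rw [ha.symm.eq]
        _ = y 2 * y 2 * y 2 * ((y 2)⁻¹ * y 3) * ((y 2)⁻¹ * y 3) := by group
    rw [l1, l2] at hb2
    have ha1 : (y 2)⁻¹ * y 3 = 1 := left_eq_mul.mp hb2
    exact hadj 2 (by omega) (by rw [show (2:ℕ)+1 = 3 from by norm_num, hy3, ha1, mul_one])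
  have hK1 : IsK (y 0) ((y 2)⁻¹ * y 3) := by
    have := hK 1 (by omega); rwa [show (1:ℕ)+2 = 3 from by norm_num] at this
  rcases (by omega : 6 ≤ M ∨ M = 4 ∨ M = 5) with h6 | h45
  · -- M ≥ 6
    have hK3 : IsK (y 0) ((y 2)⁻¹ * y 5) := by
      have := hK 3 (by omega); rwa [show (3:ℕ)+2 = 5 from by norm_num] at this
    have hcc : Commute ((y 2)⁻¹ * y 3) ((y 2)⁻¹ * y 5) := isK_comm hK1 hK3
    have h25 : Commute (y 2) (y 5) := hcomm 2 5 (by omega) (by omega)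
    have hzc3 : Commute (y 2) ((y 2)⁻¹ * y 5) := by
      show y 2 * ((y 2)⁻¹ * y 5) = ((y 2)⁻¹ * y 5) * y 2
      calc y 2 * ((y 2)⁻¹ * y 5) = (y 2)⁻¹ * (y 2 * y 5) := by group
        _ = (y 2)⁻¹ * (y 5 * y 2) := by rw [h25.eq]
        _ = ((y 2)⁻¹ * y 5) * y 2 := by group
    have h35 : Commute (y 3) (y 5) := hcomm 3 5 (by omega) (by omega)
    apply endgame
    show y 2 * ((y 2)⁻¹ * y 3) = ((y 2)⁻¹ * y 3) * y 2
    have h : (y 2 * ((y 2)⁻¹ * y 3)) * (y 2 * ((y 2)⁻¹ * y 5)) =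
        (y 2 * ((y 2)⁻¹ * y 5)) * (y 2 * ((y 2)⁻¹ * y 3)) := by
      have e3 : y 2 * ((y 2)⁻¹ * y 3) = y 3 := by group
      have e5 : y 2 * ((y 2)⁻¹ * y 5) = y 5 := by group
      rw [e3, e5]; exact h35.eq
    have e1 : y 2 * (((y 2)⁻¹ * y 3) * (y 2 * ((y 2)⁻¹ * y 5))) =
        y 2 * (y 2 * (((y 2)⁻¹ * y 5) * ((y 2)⁻¹ * y 3))) := by
      calc y 2 * (((y 2)⁻¹ * y 3) * (y 2 * ((y 2)⁻¹ * y 5)))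
          = (y 2 * ((y 2)⁻¹ * y 3)) * (y 2 * ((y 2)⁻¹ * y 5)) := by group
        _ = (y 2 * ((y 2)⁻¹ * y 5)) * (y 2 * ((y 2)⁻¹ * y 3)) := h
        _ = y 2 * ((((y 2)⁻¹ * y 5)) * y 2) * ((y 2)⁻¹ * y 3) := by group
        _ = y 2 * (y 2 * ((y 2)⁻¹ * y 5)) * ((y 2)⁻¹ * y 3) := by rw [← hzc3.eq]
        _ = y 2 * (y 2 * (((y 2)⁻¹ * y 5) * ((y 2)⁻¹ * y 3))) := by group
    have e2 := mul_left_cancel e1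
    have e3 : ((y 2)⁻¹ * y 3) * (y 2 * ((y 2)⁻¹ * y 5)) =
        (y 2 * ((y 2)⁻¹ * y 3)) * ((y 2)⁻¹ * y 5) := by
      calc ((y 2)⁻¹ * y 3) * (y 2 * ((y 2)⁻¹ * y 5))
          = y 2 * (((y 2)⁻¹ * y 5) * ((y 2)⁻¹ * y 3)) := e2
        _ = y 2 * (((y 2)⁻¹ * y 3) * ((y 2)⁻¹ * y 5)) := by rw [hcc.symm.eq]
        _ = (y 2 * ((y 2)⁻¹ * y 3)) * ((y 2)⁻¹ * y 5) := by group
    have e4 : (((y 2)⁻¹ * y 3) * y 2) * ((y 2)⁻¹ * y 5) =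
        (y 2 * ((y 2)⁻¹ * y 3)) * ((y 2)⁻¹ * y 5) := by
      calc (((y 2)⁻¹ * y 3) * y 2) * ((y 2)⁻¹ * y 5)
          = ((y 2)⁻¹ * y 3) * (y 2 * ((y 2)⁻¹ * y 5)) := by group
        _ = (y 2 * ((y 2)⁻¹ * y 3)) * ((y 2)⁻¹ * y 5) := e3
    exact (mul_right_cancel e4).symm
  rcases h45 with h4 | h5
  · -- M = 4
    have hz0g : Commute (y 2) (y 0) := hzg 0 (by omega)
    by_cases hall2 : ∀ cc ∈ (y 0).cycleFactorsFinset, Commute (y 2) cc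
    · exact endgame (commute_of_isK hz0g hall2 hK1)
    · push_neg at hall2
      obtain ⟨c0, hc0mem, hc0nc⟩ := hall2
      have hc0ne : y 2 * c0 * (y 2)⁻¹ ≠ c0 := by
        intro e
        apply hc0nc
        show y 2 * c0 = c0 * y 2
        calc y 2 * c0 = (y 2 * c0 * (y 2)⁻¹) * y 2 := by group
          _ = c0 * y 2 := by rw [e]
      have hc0'mem : y 2 * c0 * (y 2)⁻¹ ∈ (y 0).cycleFactorsFinset :=
        conj_mem_cycleFactors hz0g hc0mem
      have hdisj : Disjoint c0.support (y 2 * c0 * (y 2)⁻¹).support :=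
        (cycleFactorsFinset_pairwise_disjoint (y 0) hc0mem hc0'mem
          (fun e => hc0ne e.symm)).disjoint_support
      have hcyc0 : c0.IsCycle := (mem_cycleFactorsFinset_iff.mp hc0mem).1
      have h2le := hcyc0.two_le_card_support
      have hcardconj : (y 2 * c0 * (y 2)⁻¹).support.card = c0.support.card := card_support_conj
      have hunion := Finset.card_union_of_disjoint hdisj
      have hle := Finset.card_le_univ (c0.support ∪ (y 2 * c0 * (y 2)⁻¹).support)
      have hsc2 : c0.support.card = 2 := by omega
      have huniv : c0.support ∪ (y 2 * c0 * (y 2)⁻¹).support = Finset.univ :=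
        Finset.eq_univ_of_card _ (by omega)
      have hfac : ∀ cc ∈ (y 0).cycleFactorsFinset, cc = c0 ∨ cc = y 2 * c0 * (y 2)⁻¹ := by
        intro cc hcc
        by_contra hno
        push_neg at hno
        have hd1 := (cycleFactorsFinset_pairwise_disjoint (y 0) hcc hc0mem hno.1).disjoint_support
        have hd2 := (cycleFactorsFinset_pairwise_disjoint (y 0) hcc hc0'mem hno.2).disjoint_support
        have hdu : Disjoint cc.support (c0.support ∪ (y 2 * c0 * (y 2)⁻¹).support) :=
          Finset.disjoint_union_right.mpr ⟨hd1, hd2⟩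
        rw [huniv] at hdu
        have hccc : cc.IsCycle := (mem_cycleFactorsFinset_iff.mp hcc).1
        have h2le' := hccc.two_le_card_support
        obtain ⟨p, hp⟩ := Finset.card_pos.mp (by omega : 0 < cc.support.card)
        exact (Finset.disjoint_left.mp hdu hp) (Finset.mem_univ p)
      have hc0sw : c0.IsSwap := card_support_eq_two.mp hsc2
      have hc0'sw : (y 2 * c0 * (y 2)⁻¹).IsSwap :=
        card_support_eq_two.mp (by rw [hcardconj, hsc2])
      have hswapfac : y 2 * (y 2 * c0 * (y 2)⁻¹) * (y 2)⁻¹ = c0 := by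
        rcases hfac _ (conj_mem_cycleFactors hz0g hc0'mem) with h | h
        · exact h
        · exfalso
          apply hc0ne
          calc y 2 * c0 * (y 2)⁻¹
              = (y 2)⁻¹ * (y 2 * (y 2 * c0 * (y 2)⁻¹) * (y 2)⁻¹) * y 2 := by group
            _ = (y 2)⁻¹ * (y 2 * c0 * (y 2)⁻¹) * y 2 := by rw [h]
            _ = c0 := by group
      have hcm0 : Commute (y 2 * y 2) c0 := by
        show (y 2 * y 2) * c0 = c0 * (y 2 * y 2)
        have e2 : (y 2 * y 2) * c0 * (y 2 * y 2)⁻¹ = c0 := by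
          calc (y 2 * y 2) * c0 * (y 2 * y 2)⁻¹
              = y 2 * (y 2 * c0 * (y 2)⁻¹) * (y 2)⁻¹ := by group
            _ = c0 := hswapfac
        calc (y 2 * y 2) * c0 = ((y 2 * y 2) * c0 * (y 2 * y 2)⁻¹) * (y 2 * y 2) := by group
          _ = c0 * (y 2 * y 2) := by rw [e2]
      have hcm0' : Commute (y 2 * y 2) (y 2 * c0 * (y 2)⁻¹) := by
        show (y 2 * y 2) * (y 2 * c0 * (y 2)⁻¹) = (y 2 * c0 * (y 2)⁻¹) * (y 2 * y 2)
        have e2 : (y 2 * y 2) * (y 2 * c0 * (y 2)⁻¹) * (y 2 * y 2)⁻¹ = y 2 * c0 * (y 2)⁻¹ := by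
          calc (y 2 * y 2) * (y 2 * c0 * (y 2)⁻¹) * (y 2 * y 2)⁻¹
              = y 2 * (y 2 * (y 2 * c0 * (y 2)⁻¹) * (y 2)⁻¹) * (y 2)⁻¹ := by group
            _ = y 2 * c0 * (y 2)⁻¹ := by rw [hswapfac]
        calc (y 2 * y 2) * (y 2 * c0 * (y 2)⁻¹)
            = ((y 2 * y 2) * (y 2 * c0 * (y 2)⁻¹) * (y 2 * y 2)⁻¹) * (y 2 * y 2) := by group
          _ = (y 2 * c0 * (y 2)⁻¹) * (y 2 * y 2) := by rw [e2]
      have hcm2a : Commute (y 2 * y 2) ((y 2)⁻¹ * y 3) :=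
        commute_of_isK (hz0g.mul_left hz0g) (fun cc hcc => by
          rcases hfac cc hcc with rfl | rfl
          · exact hcm0
          · exact hcm0') hK1
      have hasq : ((y 2)⁻¹ * y 3) * ((y 2)⁻¹ * y 3) = 1 := by
        refine Equiv.ext fun p => ?_
        have hp : p ∈ c0.support ∪ (y 2 * c0 * (y 2)⁻¹).support := by
          rw [huniv]; exact Finset.mem_univ p
        have key : ((y 2)⁻¹ * y 3) (((y 2)⁻¹ * y 3) p) = p := by
          rcases Finset.mem_union.mp hp with hp' | hp'
          · exact sq_fix_of_commute_swapcycle (hK1.2 c0 hc0mem) hcyc0 (isSwap_sq hc0sw)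
              (mem_support.mp hp')
          · exact sq_fix_of_commute_swapcycle (hK1.2 _ hc0'mem) hc0'sw.isCycle
              (isSwap_sq hc0'sw) (mem_support.mp hp')
        calc (((y 2)⁻¹ * y 3) * ((y 2)⁻¹ * y 3)) p
            = ((y 2)⁻¹ * y 3) (((y 2)⁻¹ * y 3) p) := rfl
          _ = p := key
          _ = (1 : Perm α) p := rfl
      have hy3 : y 3 = y 2 * ((y 2)⁻¹ * y 3) := by group
      have hb2 := hbraid 2 (by omega)
      rw [show (2:ℕ)+1 = 3 from by norm_num, hy3] at hb2
      have l1 : y 2 * (y 2 * ((y 2)⁻¹ * y 3)) * y 2 = ((y 2)⁻¹ * y 3) * (y 2 * y 2 * y 2) := by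
        calc y 2 * (y 2 * ((y 2)⁻¹ * y 3)) * y 2
            = ((y 2 * y 2) * ((y 2)⁻¹ * y 3)) * y 2 := by group
          _ = (((y 2)⁻¹ * y 3) * (y 2 * y 2)) * y 2 := by rw [hcm2a.eq]
          _ = ((y 2)⁻¹ * y 3) * (y 2 * y 2 * y 2) := by group
      have l2 : (y 2 * ((y 2)⁻¹ * y 3)) * y 2 * (y 2 * ((y 2)⁻¹ * y 3)) = y 2 * y 2 * y 2 := by
        calc (y 2 * ((y 2)⁻¹ * y 3)) * y 2 * (y 2 * ((y 2)⁻¹ * y 3))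
            = y 2 * (((y 2)⁻¹ * y 3) * (y 2 * y 2)) * ((y 2)⁻¹ * y 3) := by group
          _ = y 2 * ((y 2 * y 2) * ((y 2)⁻¹ * y 3)) * ((y 2)⁻¹ * y 3) := by rw [← hcm2a.eq]
          _ = (y 2 * y 2 * y 2) * (((y 2)⁻¹ * y 3) * ((y 2)⁻¹ * y 3)) := by group
          _ = (y 2 * y 2 * y 2) * 1 := by rw [hasq]
          _ = y 2 * y 2 * y 2 := by group
      rw [l1, l2] at hb2
      have ha1 : (y 2)⁻¹ * y 3 = 1 := by
        calc (y 2)⁻¹ * y 3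
            = (((y 2)⁻¹ * y 3) * (y 2 * y 2 * y 2)) * (y 2 * y 2 * y 2)⁻¹ := by group
          _ = (y 2 * y 2 * y 2) * (y 2 * y 2 * y 2)⁻¹ := by rw [hb2]
          _ = 1 := by group
      exact hadj 2 (by omega) (by rw [show (2:ℕ)+1 = 3 from by norm_num, hy3, ha1, mul_one])
  · -- M = 5
    have hK2 : IsK (y 0) ((y 2)⁻¹ * y 4) := by
      have := hK 2 (by omega); rwa [show (2:ℕ)+2 = 4 from by norm_num] at this
    have hcc : Commute ((y 2)⁻¹ * y 3) ((y 2)⁻¹ * y 4) := isK_comm hK1 hK2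
    have h24 : Commute (y 2) (y 4) := hcomm 2 4 (by omega) (by omega)
    have hzc2 : Commute (y 2) ((y 2)⁻¹ * y 4) := by
      show y 2 * ((y 2)⁻¹ * y 4) = ((y 2)⁻¹ * y 4) * y 2
      calc y 2 * ((y 2)⁻¹ * y 4) = (y 2)⁻¹ * (y 2 * y 4) := by group
        _ = (y 2)⁻¹ * (y 4 * y 2) := by rw [h24.eq]
        _ = ((y 2)⁻¹ * y 4) * y 2 := by group
    have hy3 : y 3 = y 2 * ((y 2)⁻¹ * y 3) := by group
    have hy4 : y 4 = y 2 * ((y 2)⁻¹ * y 4) := by group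
    have hb2 := hbraid 2 (by omega)
    rw [show (2:ℕ)+1 = 3 from by norm_num] at hb2
    have hb3 := hbraid 3 (by omega)
    rw [show (3:ℕ)+1 = 4 from by norm_num] at hb3
    set b := (y 2)⁻¹ * y 3 with hbdef
    set c := (y 2)⁻¹ * y 4 with hcdef
    rw [hy3] at hb2
    rw [hy3, hy4] at hb3
    have hA : y 2 * b * (y 2 * y 2) * b = y 2 * y 2 * b * y 2 := by
      calc y 2 * b * (y 2 * y 2) * b = (y 2 * b) * y 2 * (y 2 * b) := by group
        _ = y 2 * (y 2 * b) * y 2 := hb2.symm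
        _ = y 2 * y 2 * b * y 2 := by group
    have hzc22 : Commute (y 2 * y 2) c := hzc2.mul_left hzc2
    have hL : (y 2 * b) * (y 2 * c) * (y 2 * b) = (y 2 * y 2 * b * y 2) * c := by
      calc (y 2 * b) * (y 2 * c) * (y 2 * b)
          = y 2 * b * (y 2 * c) * (y 2 * b) := by group
        _ = y 2 * b * (c * y 2) * (y 2 * b) := by rw [hzc2.eq]
        _ = y 2 * b * (c * (y 2 * y 2)) * b := by group
        _ = y 2 * b * ((y 2 * y 2) * c) * b := by rw [← hzc22.eq]
        _ = y 2 * b * (y 2 * y 2) * (c * b) := by group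
        _ = y 2 * b * (y 2 * y 2) * (b * c) := by rw [← hcc.eq]
        _ = (y 2 * b * (y 2 * y 2) * b) * c := by group
        _ = (y 2 * y 2 * b * y 2) * c := by rw [hA]
    have hL2 : (y 2 * y 2 * b * y 2) * c = y 2 * y 2 * c * (b * y 2) := by
      calc (y 2 * y 2 * b * y 2) * c = y 2 * y 2 * b * (y 2 * c) := by group
        _ = y 2 * y 2 * b * (c * y 2) := by rw [hzc2.eq]
        _ = y 2 * y 2 * (b * c) * y 2 := by group
        _ = y 2 * y 2 * (c * b) * y 2 := by rw [hcc.eq]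
        _ = y 2 * y 2 * c * (b * y 2) := by group
    have hR : (y 2 * c) * (y 2 * b) * (y 2 * c) = y 2 * y 2 * c * (c * (b * y 2)) := by
      calc (y 2 * c) * (y 2 * b) * (y 2 * c)
          = y 2 * (c * y 2) * (b * (y 2 * c)) := by group
        _ = y 2 * (y 2 * c) * (b * (y 2 * c)) := by rw [← hzc2.eq]
        _ = y 2 * y 2 * c * (b * (y 2 * c)) := by group
        _ = y 2 * y 2 * c * (b * (c * y 2)) := by rw [hzc2.eq]
        _ = y 2 * y 2 * c * ((b * c) * y 2) := by group
        _ = y 2 * y 2 * c * ((c * b) * y 2) := by rw [hcc.eq]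
        _ = y 2 * y 2 * c * (c * (b * y 2)) := by group
    have hfin : y 2 * y 2 * c * (b * y 2) = y 2 * y 2 * c * (c * (b * y 2)) :=
      hL2.symm.trans (hL.symm.trans (hb3.trans hR))
    have hc1 : c = 1 := right_eq_mul.mp (mul_left_cancel hfin)
    have h42 : y 4 = y 2 := by rw [hy4, hc1, mul_one]
    exact hdist 2 4 (by omega) (by omega) h42.symm



/-- For `n ≠ 4` and `k < n`, every homomorphism `ψ : B_n → S(k)` from the Artin braid group
to the symmetric group on `k` letters is cyclic, i.e. its image is a cyclic subgroup. -/
theorem braid_to_small_symmetric_is_cyclic (n k : ℕ) (hn : n ≠ 4) (hk : k < n)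
    (ψ : BraidGroup n →* Equiv.Perm (Fin k)) :
    IsCyclic ↥ψ.range := by
  classical
  -- the relations hold among the generators
  have hrel1 : ∀ i j : Fin (n-1), (i:ℕ) + 2 ≤ (j:ℕ) →
      Commute (braidσ (n := n) i) (braidσ j) := by
    intro i j hij
    have hr : (FreeGroup.of i * FreeGroup.of j * (FreeGroup.of i)⁻¹ * (FreeGroup.of j)⁻¹)
        ∈ braidRels (n-1) := Or.inl ⟨i, j, hij, rfl⟩
    have h1 : PresentedGroup.mk (braidRels (n-1))
        (FreeGroup.of i * FreeGroup.of j * (FreeGroup.of i)⁻¹ * (FreeGroup.of j)⁻¹) = 1 :=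
      (QuotientGroup.eq_one_iff _).mpr (Subgroup.subset_normalClosure hr)
    rw [map_mul, map_mul, map_inv, map_inv] at h1
    have h1' : braidσ (n := n) i * braidσ j * (braidσ i)⁻¹ * (braidσ j)⁻¹ = 1 := h1
    show braidσ (n := n) i * braidσ j = braidσ j * braidσ i
    calc braidσ (n := n) i * braidσ j
        = (braidσ (n := n) i * braidσ j * (braidσ i)⁻¹ * (braidσ j)⁻¹) * (braidσ j * braidσ i) := by
          group
      _ = 1 * (braidσ j * braidσ i) := by rw [h1']
      _ = braidσ j * braidσ i := by group
  have hrel2 : ∀ i j : Fin (n-1), (i:ℕ) + 1 = (j:ℕ) →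
      braidσ (n := n) i * braidσ j * braidσ i = braidσ j * braidσ i * braidσ j := by
    intro i j hij
    have hr : (FreeGroup.of i * FreeGroup.of j * FreeGroup.of i *
        (FreeGroup.of j * FreeGroup.of i * FreeGroup.of j)⁻¹) ∈ braidRels (n-1) :=
      Or.inr ⟨i, j, hij, rfl⟩
    have h1 : PresentedGroup.mk (braidRels (n-1)) (FreeGroup.of i * FreeGroup.of j *
        FreeGroup.of i * (FreeGroup.of j * FreeGroup.of i * FreeGroup.of j)⁻¹) = 1 :=
      (QuotientGroup.eq_one_iff _).mpr (Subgroup.subset_normalClosure hr)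
    rw [map_mul, map_mul, map_inv, map_mul, map_mul] at h1
    have h1' : braidσ (n := n) i * braidσ j * braidσ i *
        (braidσ j * braidσ i * braidσ j)⁻¹ = 1 := h1
    exact mul_inv_eq_one.mp h1'
  -- the permutation sequence
  set x : ℕ → Perm (Fin k) := fun i => if h : i < n - 1 then ψ (braidσ ⟨i, h⟩) else 1 with hx
  have hxval : ∀ i (h : i < n - 1), x i = ψ (braidσ ⟨i, h⟩) := fun i h => dif_pos h
  have hxbraid : ∀ i, i + 1 < n - 1 → x i * x (i+1) * x i = x (i+1) * x i * x (i+1) := by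
    intro i hi
    rw [hxval i (by omega), hxval (i+1) hi]
    have h := congrArg ψ (hrel2 ⟨i, by omega⟩ ⟨i+1, hi⟩ rfl)
    simpa [map_mul] using h
  have hxcomm : ∀ i j, j < n - 1 → i + 2 ≤ j → Commute (x i) (x j) := by
    intro i j hj hij
    rw [hxval i (by omega), hxval j hj]
    have h := congrArg ψ (hrel1 ⟨i, by omega⟩ ⟨j, hj⟩ hij).eq
    show ψ (braidσ ⟨i, by omega⟩) * ψ (braidσ ⟨j, hj⟩) =
      ψ (braidσ ⟨j, hj⟩) * ψ (braidσ ⟨i, by omega⟩)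
    simpa [map_mul] using h
  -- collapse
  have hcoll : ∀ i j, i < n - 1 → j < n - 1 → x i = x j := by
    rcases (by omega : n - 1 ≤ 1 ∨ n - 1 = 2 ∨ 4 ≤ n - 1) with h1 | h2
    · intro i j hi hj
      have : i = j := by omega
      rw [this]
    · exact braid_seq_collapse (n-1) h2 (Fin k) (by simpa using (by omega : k ≤ n - 1))
        x hxbraid hxcomm
  have hgen : ∀ i j : Fin (n-1), ψ (braidσ i) = ψ (braidσ j) := by
    intro i j
    have h := hcoll i j i.isLt j.isLt
    rw [hxval i i.isLt, hxval j j.isLt] at h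
    simpa using h
  -- the range is the closure of the images of the generators
  have hrange : ψ.range = Subgroup.closure (Set.range fun i => ψ (braidσ i)) := by
    rw [MonoidHom.range_eq_map, ← PresentedGroup.closure_range_of (braidRels (n-1)),
      MonoidHom.map_closure]
    congr 1
    rw [← Set.range_comp]
    rfl
  rcases Nat.eq_zero_or_pos (n-1) with h0 | hpos
  · have hempty : IsEmpty (Fin (n-1)) := by rw [h0]; infer_instance
    rw [hrange, Set.range_eq_empty, Subgroup.closure_empty]
    exact isCyclic_of_subsingleton
  · have hr : (Set.range fun i => ψ (braidσ i)) = {ψ (braidσ ⟨0, hpos⟩)} := by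
      ext v
      constructor
      · rintro ⟨i, rfl⟩
        exact hgen i ⟨0, hpos⟩
      · intro h
        exact ⟨⟨0, hpos⟩, h.symm⟩
    rw [hrange, hr, ← Subgroup.zpowers_eq_closure]
    set a := ψ (braidσ ⟨0, hpos⟩)
    exact ⟨⟨⟨a, Subgroup.mem_zpowers a⟩, by
      rintro ⟨v, hv⟩
      obtain ⟨m, hm⟩ := Subgroup.mem_zpowers_iff.mp hv
      refine Subgroup.mem_zpowers_iff.mpr ⟨m, ?_⟩
      apply Subtype.ext
      simpa using hm⟩⟩
end
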